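/- Let (E_t, β_{s,t})_{s,t∈ℚ_{>0}} be a rational-time subproduct system of two-dimensional Hilbert spaces with vectors x_t, y_t ∈ E_t satisfying Condition (3): there are c ∈ (0,∞) and complex numbers η_t with |η_t|=1, η_{s+t}=η_s·η_t, such that ‖x_t‖=1, ⟨x_t,y_t⟩=0, ‖y_t‖² = t if c=1 and ‖y_t‖² = (c^{2t}−1)/(c²−1) if c≠1, β_{s,t}(x_{s+t})=x_s⊗x_t, β_{s,t}(y_{s+t})=y_s⊗x_t + c^s η_s x_s⊗y_t for all s,t ∈ ℚ_{>0}. If the function on ℚ ∩ [0,1] equal to ⟨β_{t,1−t}(y_1), ξ_{1−t,t}(β_{1−t,t}(y_1))⟩ for t ∈ ℚ ∩ (0,1) and equal to ‖y_1‖² = 1 at t ∈ {0,1} is uniformly continuous, then there exists b ∈ ℝ such that η_t = e^{ibt} for all t ∈ ℚ_{>0}. -/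

import Mathlib

noncomputable section

open scoped TensorProduct ComplexConjugate

namespace SubprodHilbert

section TensorConstruction


variable {E F : Type*} [NormedAddCommGroup E] [InnerProductSpace ℂ E]
  [NormedAddCommGroup F] [InnerProductSpace ℂ F]

local notation "⟪" x ", " y "⟫" => @inner ℂ _ _ x y

/-- For fixed `u, v`, the ℂ-bilinear functional `(u', v') ↦ ⟪u,u'⟫ ⟪v,v'⟫`. -/
def innerAux (u : E) (v : F) : E →ₗ[ℂ] F →ₗ[ℂ] ℂ :=
  LinearMap.mk₂ ℂ (fun u' v' => ⟪u, u'⟫ * ⟪v, v'⟫)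
    (fun m₁ m₂ n => by simp [inner_add_right]; ring)
    (fun c m n => by simp [inner_smul_right]; ring)
    (fun m n₁ n₂ => by simp [inner_add_right]; ring)
    (fun c m n => by simp [inner_smul_right]; ring)

@[simp] lemma innerAux_apply (u u' : E) (v v' : F) :
    innerAux u v u' v' = ⟪u, u'⟫ * ⟪v, v'⟫ := rfl

/-- The (conjugate-linear-in-the-first-variable) map sending `z : E ⊗ F` to the linear
functional `w ↦ ⟪z, w⟫`. -/
def innerFunc : E ⊗[ℂ] F →+ (E ⊗[ℂ] F →ₗ[ℂ] ℂ) :=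
  TensorProduct.liftAddHom
    (AddMonoidHom.mk'
      (fun u => AddMonoidHom.mk' (fun v => TensorProduct.lift (innerAux u v))
        (fun v₁ v₂ => by
          apply TensorProduct.ext'
          intro u' v'
          simp [inner_add_left]
          ring))
      (fun u₁ u₂ => by
        ext v : 1
        apply TensorProduct.ext'
        intro u' v'
        simp [inner_add_left]
        ring))
    (fun c u v => by
      apply TensorProduct.ext'
      intro u' v'
      simp [inner_smul_left]
      ring)

@[simp] lemma innerFunc_tmul (u u' : E) (v v' : F) :
    innerFunc (u ⊗ₜ[ℂ] v) (u' ⊗ₜ[ℂ] v') = ⟪u, u'⟫ * ⟪v, v'⟫ := rfl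

lemma innerFunc_smul (c : ℂ) (z : E ⊗[ℂ] F) :
    innerFunc (c • z) = conj c • innerFunc z := by
  induction z using TensorProduct.induction_on with
  | zero => simp
  | tmul u v =>
      rw [TensorProduct.smul_tmul']
      apply TensorProduct.ext'
      intro u' v'
      simp [inner_smul_left]
      ring
  | add z₁ z₂ h₁ h₂ => rw [smul_add, map_add, map_add, h₁, h₂, smul_add]

lemma innerFunc_conj_symm (z w : E ⊗[ℂ] F) :
    conj (innerFunc w z) = innerFunc z w := by
  induction z using TensorProduct.induction_on with
  | zero => simp
  | tmul u v =>
      induction w using TensorProduct.induction_on with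
      | zero => simp
      | tmul u' v' =>
          simp only [innerFunc_tmul, map_mul, inner_conj_symm]
      | add w₁ w₂ h₁ h₂ => simp [map_add, h₁, h₂]
  | add z₁ z₂ h₁ h₂ => simp [map_add, h₁, h₂]

lemma exists_orthonormal_rep (z : E ⊗[ℂ] F) :
    ∃ (n : ℕ) (e : Fin n → E) (w : Fin n → F),
      Orthonormal ℂ e ∧ z = ∑ i, e i ⊗ₜ[ℂ] w i := by
  obtain ⟨S, rfl⟩ := TensorProduct.exists_finset z
  set U : Submodule ℂ E := Submodule.span ℂ (Prod.fst '' (S : Set (E × F))) with hU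
  haveI : FiniteDimensional ℂ U :=
    FiniteDimensional.span_of_finite ℂ (S.finite_toSet.image _)
  let b : OrthonormalBasis (Fin (Module.finrank ℂ U)) ℂ U := stdOrthonormalBasis ℂ U
  have hone : Orthonormal ℂ (fun i => (b i : E)) := by
    have hb := b.orthonormal
    constructor
    · intro i; simpa [norm] using hb.1 i
    · intro i j hij; simpa [Submodule.coe_inner] using hb.2 hij
  refine ⟨_, fun i => (b i : E), fun i => ∑ p ∈ S, ⟪(b i : E), p.1⟫ • p.2, hone, ?_⟩
  have key : ∀ p ∈ S, p.1 ⊗ₜ[ℂ] p.2 = ∑ i, ⟪(b i : E), p.1⟫ • ((b i : E) ⊗ₜ[ℂ] p.2) := by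
    intro p hp
    have hmem : p.1 ∈ U := Submodule.subset_span ⟨p, hp, rfl⟩
    have hrep : ((∑ i, (⟪b i, (⟨p.1, hmem⟩ : U)⟫ : ℂ) • b i : U) : E) = p.1 := by
      rw [b.sum_repr' ⟨p.1, hmem⟩]
    have h2 : ∀ i, (⟪b i, (⟨p.1, hmem⟩ : U)⟫ : ℂ) = ⟪(b i : E), p.1⟫ := fun i =>
      Submodule.coe_inner U (b i) ⟨p.1, hmem⟩
    have hrep' : p.1 = ∑ i, ⟪(b i : E), p.1⟫ • (b i : E) := by
      calc p.1 = ((∑ i, (⟪b i, (⟨p.1, hmem⟩ : U)⟫ : ℂ) • b i : U) : E) := hrep.symm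
        _ = ∑ i, (⟪b i, (⟨p.1, hmem⟩ : U)⟫ : ℂ) • (b i : E) := by push_cast; rfl
        _ = ∑ i, ⟪(b i : E), p.1⟫ • (b i : E) := Finset.sum_congr rfl fun i _ => by rw [h2]
    calc p.1 ⊗ₜ[ℂ] p.2 = (∑ i, ⟪(b i : E), p.1⟫ • (b i : E)) ⊗ₜ[ℂ] p.2 := by rw [← hrep']
      _ = ∑ i, ⟪(b i : E), p.1⟫ • ((b i : E) ⊗ₜ[ℂ] p.2) := by
          rw [TensorProduct.sum_tmul]
          refine Finset.sum_congr rfl fun i _ => ?_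
          rw [TensorProduct.smul_tmul']
  calc ∑ p ∈ S, p.1 ⊗ₜ[ℂ] p.2
      = ∑ p ∈ S, ∑ i, ⟪(b i : E), p.1⟫ • ((b i : E) ⊗ₜ[ℂ] p.2) :=
        Finset.sum_congr rfl key
    _ = ∑ i, ∑ p ∈ S, ⟪(b i : E), p.1⟫ • ((b i : E) ⊗ₜ[ℂ] p.2) := Finset.sum_comm
    _ = ∑ i, (b i : E) ⊗ₜ[ℂ] (∑ p ∈ S, ⟪(b i : E), p.1⟫ • p.2) := by
        refine Finset.sum_congr rfl fun i _ => ?_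
        rw [TensorProduct.tmul_sum]
        refine Finset.sum_congr rfl fun p _ => ?_
        rw [TensorProduct.tmul_smul]

lemma innerFunc_self (n : ℕ) (e : Fin n → E) (w : Fin n → F) (he : Orthonormal ℂ e) :
    innerFunc (∑ i, e i ⊗ₜ[ℂ] w i) (∑ i, e i ⊗ₜ[ℂ] w i) = ∑ i, ⟪w i, w i⟫ := by
  have hee : ∀ i j, (⟪e i, e j⟫ : ℂ) = if i = j then 1 else 0 := orthonormal_iff_ite.mp he
  simp only [map_sum, LinearMap.sum_apply, Finset.sum_apply, innerFunc_tmul, hee, ite_mul,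
    one_mul, zero_mul]
  rw [Finset.sum_comm]
  simp

/-- The inner-product-space core on the algebraic tensor product of two complex
inner product spaces, determined by `⟪u ⊗ v, u' ⊗ v'⟫ = ⟪u,u'⟫ ⟪v,v'⟫`. -/
def tensorCore : InnerProductSpace.Core ℂ (E ⊗[ℂ] F) where
  inner z w := innerFunc z w
  conj_inner_symm := innerFunc_conj_symm
  re_inner_nonneg z := by
    show 0 ≤ RCLike.re (innerFunc z z)
    obtain ⟨n, e, w, he, rfl⟩ := exists_orthonormal_rep z
    rw [innerFunc_self n e w he]
    rw [map_sum]
    exact Finset.sum_nonneg fun i _ => inner_self_nonneg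
  add_left z₁ z₂ w := by
    show innerFunc (z₁ + z₂) w = innerFunc z₁ w + innerFunc z₂ w
    rw [map_add]; rfl
  smul_left z w c := by
    show innerFunc (c • z) w = conj c * innerFunc z w
    rw [innerFunc_smul]; rfl
  definite z hz := by
    replace hz : innerFunc z z = 0 := hz
    obtain ⟨n, e, w, he, rfl⟩ := exists_orthonormal_rep z
    rw [innerFunc_self n e w he] at hz
    have hz' : ∑ i, (‖w i‖ ^ 2 : ℝ) = 0 := by
      have := congrArg Complex.re hz
      simpa [← @inner_self_eq_norm_sq ℂ] using this
    have hw : ∀ i ∈ Finset.univ, w i = 0 := by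
      intro i hi
      have h0 : (‖w i‖ ^ 2 : ℝ) = 0 :=
        (Finset.sum_eq_zero_iff_of_nonneg fun j _ => sq_nonneg _).mp hz' i hi
      simpa using h0
    calc ∑ i, e i ⊗ₜ[ℂ] w i = ∑ i : Fin n, (0 : E ⊗[ℂ] F) :=
          Finset.sum_congr rfl fun i hi => by rw [hw i hi, TensorProduct.tmul_zero]
      _ = 0 := Finset.sum_const_zero

instance tensorNormedAddCommGroup : NormedAddCommGroup (E ⊗[ℂ] F) :=
  @InnerProductSpace.Core.toNormedAddCommGroup ℂ _ _ _ _ tensorCore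

instance tensorInnerProductSpace : InnerProductSpace ℂ (E ⊗[ℂ] F) :=
  InnerProductSpace.ofCore tensorCore.toCore

@[simp] lemma inner_tmul (u u' : E) (v v' : F) :
    (inner ℂ (u ⊗ₜ[ℂ] v) (u' ⊗ₜ[ℂ] v') : ℂ) = ⟪u, u'⟫ * ⟪v, v'⟫ := rfl
end TensorConstruction


/-- Cast between the fibers of a family of inner product spaces along an equality of
indices, as a linear isometric isomorphism. -/
def castE {ι : Type*} (E : ι → Type*) [∀ t, NormedAddCommGroup (E t)]
    [∀ t, InnerProductSpace ℂ (E t)] {a b : ι} (h : a = b) : E a ≃ₗᵢ[ℂ] E b := by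
  subst h; exact LinearIsometryEquiv.refl ℂ (E a)


/-- The positive rationals, the time domain of a rational-time subproduct system. -/
abbrev Qpos : Type := {q : ℚ // 0 < q}

section Rational

variable (E : Qpos → Type*)
  [∀ t, NormedAddCommGroup (E t)] [∀ t, InnerProductSpace ℂ (E t)]
variable (β : ∀ s t : Qpos, E (s + t) →ₗᵢ[ℂ] (E s ⊗[ℂ] E t))

/-- The associativity condition in the definition of a rational-time subproduct system. -/
def SubprodAssocQ : Prop :=
  ∀ r s t : Qpos, ∀ u : E (r + s + t),
    (TensorProduct.assoc ℂ (E r) (E s) (E t))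
      (TensorProduct.map (β r s).toLinearMap LinearMap.id (β (r + s) t u))
    = TensorProduct.map LinearMap.id (β s t).toLinearMap
        (β r (s + t) (castE E (add_assoc r s t) u))

/-- Condition (1) of Theorem 3.1, with the parameter `a` explicit:
`(x, y)` behaves like two exponential units at angle `aᵗ`. -/
def Cond1With (a : ℝ) (x y : ∀ t : Qpos, E t) : Prop :=
  (∀ t, ‖x t‖ = 1) ∧ (∀ t, ‖y t‖ = 1) ∧
  (∀ t : Qpos, (inner ℂ (x t) (y t) : ℂ) = ((a ^ ((t : ℚ) : ℝ) : ℝ) : ℂ)) ∧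
  (∀ s t : Qpos, β s t (x (s + t)) = x s ⊗ₜ[ℂ] x t) ∧
  (∀ s t : Qpos, β s t (y (s + t)) = y s ⊗ₜ[ℂ] y t)

/-- Condition (1) of Theorem 3.1: `∃ a ∈ [0,1)` as in `Cond1With`. -/
def Cond1 (x y : ∀ t : Qpos, E t) : Prop :=
  ∃ a : ℝ, 0 ≤ a ∧ a < 1 ∧ Cond1With E β a x y

/-- Condition (3) of Theorem 3.1, with the parameter `c` and the multiplicative
unimodular family `η` explicit. -/
def Cond3With (c : ℝ) (η : Qpos → ℂ) (x y : ∀ t : Qpos, E t) : Prop :=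
  (∀ t, ‖η t‖ = 1) ∧ (∀ s t : Qpos, η (s + t) = η s * η t) ∧
  (∀ t, ‖x t‖ = 1) ∧ (∀ t : Qpos, (inner ℂ (x t) (y t) : ℂ) = 0) ∧
  (∀ t : Qpos, ‖y t‖ ^ 2 =
    if c = 1 then ((t : ℚ) : ℝ) else (c ^ (2 * ((t : ℚ) : ℝ)) - 1) / (c ^ 2 - 1)) ∧
  (∀ s t : Qpos, β s t (x (s + t)) = x s ⊗ₜ[ℂ] x t) ∧
  (∀ s t : Qpos, β s t (y (s + t)) =
    y s ⊗ₜ[ℂ] x t + (((c ^ ((s : ℚ) : ℝ) : ℝ) : ℂ) * η s) • (x s ⊗ₜ[ℂ] y t))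

/-- Condition (3) of Theorem 3.1. -/
def Cond3 (x y : ∀ t : Qpos, E t) : Prop :=
  ∃ c : ℝ, 0 < c ∧ ∃ η : Qpos → ℂ, Cond3With E β c η x y

/-- Condition (4) of Theorem 3.1. -/
def Cond4 (x y : ∀ t : Qpos, E t) : Prop :=
  (∀ t, ‖x t‖ = 1) ∧ (∀ t, ‖y t‖ = 1) ∧
  (∀ t : Qpos, (inner ℂ (x t) (y t) : ℂ) = 0) ∧
  (∀ s t : Qpos, β s t (x (s + t)) = x s ⊗ₜ[ℂ] x t) ∧
  (∀ s t : Qpos, β s t (y (s + t)) = y s ⊗ₜ[ℂ] x t)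

/-- Condition (5) of Theorem 3.1. -/
def Cond5 (x y : ∀ t : Qpos, E t) : Prop :=
  (∀ t, ‖x t‖ = 1) ∧ (∀ t, ‖y t‖ = 1) ∧
  (∀ t : Qpos, (inner ℂ (x t) (y t) : ℂ) = 0) ∧
  (∀ s t : Qpos, β s t (x (s + t)) = x s ⊗ₜ[ℂ] x t) ∧
  (∀ s t : Qpos, β s t (y (s + t)) = x s ⊗ₜ[ℂ] y t)

/-- The function `t ↦ ⟨β_{t,1-t} h, ξ_{1-t,t} β_{1-t,t} h⟩` on `ℚ ∩ (0,1)` (written here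
with the two arguments of the inner product exchanged, to match the convention of Mathlib's
`inner`, which is conjugate-linear in its first argument), extended by `‖h‖²` elsewhere. -/
def flipInnerFn (h : E 1) : ℚ → ℂ := fun t =>
  if ht : 0 < t ∧ t < 1 then
    (inner ℂ
      ((TensorProduct.comm ℂ (E ⟨1 - t, by linarith [ht.2]⟩) (E ⟨t, ht.1⟩))
        (β ⟨1 - t, by linarith [ht.2]⟩ ⟨t, ht.1⟩
          (castE E (by apply Subtype.ext; simp) h)))
      (β ⟨t, ht.1⟩ ⟨1 - t, by linarith [ht.2]⟩
        (castE E (by apply Subtype.ext; simp) h)) : ℂ)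
  else ((‖h‖ : ℂ)) ^ 2

end Rational

/-! Expanding `β_{t,1-t}(y₁)` and `β_{1-t,t}(y₁)` by Condition (3) shows that for `0 < t < 1`
the flipped inner product equals `η_t · G(t)`, where
`G(t) = cᵗ ‖y_{1-t}‖² + c^{1-t} conj(η₁) ‖y_t‖²` is continuous with `G(0) = ‖y₁‖² = 1`.
Continuity of the flipped inner product at `0` therefore forces `η_t → 1` as `t → 0⁺`.
A unimodular multiplicative `η` tending to `1` has positive real part on some `(0, δ]`, where
`arg η` is additive; so `arg η_u = b u` whenever `δ` is an integer multiple of `u`, and writing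
an arbitrary `t` as a multiple of a common divisor of `t` and `δ` gives `η_t = e^{ibt}`. -/

open Filter Topology

local notation "𝓝₊₀" => comap ((↑) : Qpos → ℚ) (𝓝 (0 : ℚ))

section Character

lemma exists_common_unit (s t : Qpos) :
    ∃ (u : Qpos) (m n : ℕ), (s : ℚ) = m * u ∧ (t : ℚ) = n * u := by
  have hnum (q : Qpos) : ((q : ℚ).num.toNat : ℚ) = (q : ℚ).num := by
    exact_mod_cast Int.toNat_of_nonneg (Rat.num_pos.mpr q.2).le
  refine ⟨⟨1 / ((s : ℚ).den * (t : ℚ).den), by positivity⟩,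
    (s : ℚ).num.toNat * (t : ℚ).den, (t : ℚ).num.toNat * (s : ℚ).den, ?_, ?_⟩
  all_goals
    push_cast [hnum]
    field_simp
    rw [← Rat.mul_den_eq_num]

lemma exists_eq_add_of_coe_eq_succ_mul {t u : Qpos} {n : ℕ} (hn : 0 < n)
    (h : (t : ℚ) = (n + 1 : ℕ) * u) : ∃ s : Qpos, (s : ℚ) = n * u ∧ t = s + u :=
  ⟨⟨n * u, by have := u.2; positivity⟩, rfl, Subtype.ext (by push_cast at h ⊢; linarith)⟩

variable {η : Qpos → ℂ}

lemma eq_pow_of_coe_eq_natCast_mul (hmul : ∀ s t : Qpos, η (s + t) = η s * η t) {n : ℕ} :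
    ∀ {t u : Qpos}, (t : ℚ) = n * u → η t = η u ^ n := by
  induction n with
  | zero => intro t u h; exact absurd h (by simpa using t.2.ne')
  | succ n ih =>
    intro t u h
    rcases Nat.eq_zero_or_pos n with rfl | hn
    · obtain rfl : t = u := Subtype.ext (by simpa using h)
      exact (pow_one _).symm
    · obtain ⟨s, hs, rfl⟩ := exists_eq_add_of_coe_eq_succ_mul hn h
      rw [hmul, ih hs, pow_succ]

/-- On `(0, δ]` the arguments lie in `(-π/2, π/2)`, so `arg (η s * η u) = arg η s + arg η u`
never wraps around. -/
lemma arg_eq_natCast_mul_of_coe_eq {δ : ℚ} (hmul : ∀ s t : Qpos, η (s + t) = η s * η t)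
    (hre : ∀ t : Qpos, (t : ℚ) ≤ δ → 0 < (η t).re) {n : ℕ} :
    ∀ {t u : Qpos}, (t : ℚ) = n * u → (t : ℚ) ≤ δ → (η t).arg = n * (η u).arg := by
  induction n with
  | zero => intro t u h; exact absurd h (by simpa using t.2.ne')
  | succ n ih =>
    intro t u h htδ
    rcases Nat.eq_zero_or_pos n with rfl | hn
    · obtain rfl : t = u := Subtype.ext (by simpa using h)
      simp
    · obtain ⟨s, hs, rfl⟩ := exists_eq_add_of_coe_eq_succ_mul hn h
      rw [Positive.coe_add] at htδ
      have hsδ : (s : ℚ) ≤ δ := by linarith [u.2]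
      have huδ : (u : ℚ) ≤ δ := by linarith [s.2]
      have hs' := abs_lt.mp (Complex.abs_arg_lt_pi_div_two_iff.mpr (Or.inl (hre s hsδ)))
      have hu' := abs_lt.mp (Complex.abs_arg_lt_pi_div_two_iff.mpr (Or.inl (hre u huδ)))
      have hadd : (η s * η u).arg = (η s).arg + (η u).arg :=
        (Complex.arg_mul_eq_add_arg_iff (Complex.ne_zero_of_re_pos (hre s hsδ))
          (Complex.ne_zero_of_re_pos (hre u huδ))).mpr
          ⟨by linarith [hs'.1, hu'.1], by linarith [hs'.2, hu'.2, Real.pi_pos]⟩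
      rw [hmul, hadd, ih hs hsδ]
      push_cast
      ring

theorem exists_eq_exp_of_tendsto_one (habs : ∀ t, ‖η t‖ = 1)
    (hmul : ∀ s t : Qpos, η (s + t) = η s * η t) (hη : Tendsto η 𝓝₊₀ (𝓝 1)) :
    ∃ b : ℝ, ∀ t : Qpos, η t = Complex.exp (Complex.I * (b : ℂ) * (((t : ℚ) : ℝ) : ℂ)) := by
  have hre : ∀ᶠ t in 𝓝₊₀, 0 < (η t).re :=
    (Complex.continuous_re.tendsto 1).comp hη |>.eventually (lt_mem_nhds (by simp))
  obtain ⟨ε, hε, hεre⟩ := ((nhds_basis_Ioo_pos (0 : ℚ)).comap _).eventually_iff.mp hre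
  set δ : Qpos := ⟨ε / 2, by positivity⟩
  have hreδ (t : Qpos) (ht : (t : ℚ) ≤ δ) : 0 < (η t).re :=
    hεre ⟨by linarith [t.2], by simp only [δ] at ht; linarith⟩
  refine ⟨(η δ).arg / (δ : ℚ), fun t => ?_⟩
  obtain ⟨u, m, n, htu, hδu⟩ := exists_common_unit t δ
  have hn : (n : ℝ) ≠ 0 := Nat.cast_ne_zero.mpr (by rintro rfl; simpa [hδu] using δ.2)
  have hu0 : ((u : ℚ) : ℝ) ≠ 0 := by exact_mod_cast u.2.ne'
  have hargu : (η δ).arg / ((δ : ℚ) : ℝ) * (u : ℚ) = (η u).arg := by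
    rw [arg_eq_natCast_mul_of_coe_eq hmul hreδ hδu le_rfl, hδu]
    push_cast
    field_simp
  have hu : η u = Complex.exp ((η u).arg * Complex.I) := by
    simpa [habs u] using (Complex.norm_mul_exp_arg_mul_I (η u)).symm
  rw [eq_pow_of_coe_eq_natCast_mul hmul htu, hu, ← Complex.exp_nat_mul, htu, ← hargu]
  push_cast
  ring

end Character

lemma eventually_coe_lt_one : ∀ᶠ t : Qpos in 𝓝₊₀, (t : ℚ) < 1 :=
  tendsto_comap.eventually (Iio_mem_nhds one_pos)

lemma tendsto_comp_coe_of_continuousWithinAt {X : Type*} [TopologicalSpace X] {f : ℚ → X}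
    (hf : ContinuousWithinAt f (Set.Icc 0 1) 0) :
    Tendsto (fun t : Qpos => f t) 𝓝₊₀ (𝓝 (f 0)) :=
  hf.tendsto.comp <| tendsto_nhdsWithin_iff.mpr
    ⟨tendsto_comap, eventually_coe_lt_one.mono fun t ht => ⟨t.2.le, ht.le⟩⟩

/-- `‖y_t‖²` in Condition (3), for real `t`. -/
def yNormSq (c r : ℝ) : ℝ := if c = 1 then r else (c ^ (2 * r) - 1) / (c ^ 2 - 1)

/-- The factor `G` of the flipped inner product, with `ω = conj η₁`. -/
def flipFactor (c : ℝ) (ω : ℂ) (r : ℝ) : ℂ :=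
  ((c ^ r * yNormSq c (1 - r) : ℝ) : ℂ) + ((c ^ (1 - r) : ℝ) : ℂ) * ω * (yNormSq c r : ℂ)

section Profile

variable {c : ℝ}

lemma continuous_yNormSq (hc : 0 < c) : Continuous (yNormSq c) := by
  unfold yNormSq
  split_ifs
  · exact continuous_id
  · exact ((continuous_const.rpow (continuous_const.mul continuous_id) fun _ => Or.inl hc.ne').sub
      continuous_const).div_const _

@[simp] lemma yNormSq_zero : yNormSq c 0 = 0 := by
  unfold yNormSq; split_ifs <;> simp

lemma yNormSq_one (hc : 0 < c) : yNormSq c 1 = 1 := by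
  unfold yNormSq
  split_ifs with h1
  · rfl
  · have : c ^ 2 - 1 ≠ 0 := fun h => h1 (by nlinarith)
    rw [mul_one, Real.rpow_two, div_self this]

lemma continuous_flipFactor (hc : 0 < c) (ω : ℂ) : Continuous (flipFactor c ω) := by
  have := continuous_yNormSq hc
  have := hc.ne'
  unfold flipFactor
  fun_prop (disch := assumption)

lemma flipFactor_zero (hc : 0 < c) (ω : ℂ) : flipFactor c ω 0 = 1 := by
  simp [flipFactor, yNormSq_one hc]

end Profile

section TensorInner

/- `inner ℂ` on `F ⊗[ℂ] G` elaborates to Mathlib's `TensorProduct.instInner`, while the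
generic `inner_add_left` etc. would pick up `tensorInnerProductSpace` and fail to match; they are
transported from Mathlib's own instance instead. -/
variable {F G : Type*} [NormedAddCommGroup F] [InnerProductSpace ℂ F]
  [NormedAddCommGroup G] [InnerProductSpace ℂ G]

lemma tensor_inner_add_left (a b w : F ⊗[ℂ] G) :
    (inner ℂ (a + b) w : ℂ) = inner ℂ a w + inner ℂ b w :=
  letI : NormedAddCommGroup (F ⊗[ℂ] G) := TensorProduct.instNormedAddCommGroup
  letI : InnerProductSpace ℂ (F ⊗[ℂ] G) := TensorProduct.instInnerProductSpace
  inner_add_left a b w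

lemma tensor_inner_add_right (a v w : F ⊗[ℂ] G) :
    (inner ℂ a (v + w) : ℂ) = inner ℂ a v + inner ℂ a w :=
  letI : NormedAddCommGroup (F ⊗[ℂ] G) := TensorProduct.instNormedAddCommGroup
  letI : InnerProductSpace ℂ (F ⊗[ℂ] G) := TensorProduct.instInnerProductSpace
  inner_add_right a v w

lemma tensor_inner_smul_left (r : ℂ) (a w : F ⊗[ℂ] G) :
    (inner ℂ (r • a) w : ℂ) = conj r * inner ℂ a w :=
  letI : NormedAddCommGroup (F ⊗[ℂ] G) := TensorProduct.instNormedAddCommGroup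
  letI : InnerProductSpace ℂ (F ⊗[ℂ] G) := TensorProduct.instInnerProductSpace
  inner_smul_left a w r

lemma tensor_inner_smul_right (r : ℂ) (a w : F ⊗[ℂ] G) :
    (inner ℂ a (r • w) : ℂ) = r * inner ℂ a w :=
  letI : NormedAddCommGroup (F ⊗[ℂ] G) := TensorProduct.instNormedAddCommGroup
  letI : InnerProductSpace ℂ (F ⊗[ℂ] G) := TensorProduct.instInnerProductSpace
  inner_smul_right a w r

end TensorInner

lemma castE_apply {ι : Type*} (E : ι → Type*) [∀ t, NormedAddCommGroup (E t)]
    [∀ t, InnerProductSpace ℂ (E t)] (y : ∀ t, E t) {a b : ι} (h : a = b) :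
    castE E h (y a) = y b := by
  subst h; rfl

section Cond3

variable {E : Qpos → Type*} [∀ t, NormedAddCommGroup (E t)] [∀ t, InnerProductSpace ℂ (E t)]
  {β : ∀ s t : Qpos, E (s + t) →ₗᵢ[ℂ] (E s ⊗[ℂ] E t)} {c : ℝ} {η : Qpos → ℂ}
  {x y : ∀ t : Qpos, E t}

lemma flipInnerFn_eq_mul_flipFactor (h3 : Cond3With E β c η x y) {t : ℚ}
    (ht : 0 < t ∧ t < 1) :
    flipInnerFn E β (y 1) t = η ⟨t, ht.1⟩ * flipFactor c (conj (η 1)) t := by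
  obtain ⟨habs, hmul, hxnorm, hxy, hynorm, -, hβy⟩ := h3
  have hyx (s : Qpos) : (inner ℂ (y s) (x s) : ℂ) = 0 := inner_eq_zero_symm.mp (hxy s)
  have hxx (s : Qpos) : (inner ℂ (x s) (x s) : ℂ) = 1 := by
    rw [inner_self_eq_norm_sq_to_K, hxnorm]; norm_num
  have hyy (s : Qpos) : (inner ℂ (y s) (y s) : ℂ) = (yNormSq c s : ℂ) := by
    have h : ‖y s‖ ^ 2 = yNormSq c s := hynorm s
    rw [← h, inner_self_eq_norm_sq_to_K]; simp
  have hconj : conj (η ⟨1 - t, by linarith [ht.2]⟩) = η ⟨t, ht.1⟩ * conj (η 1) := by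
    have h1 : (1 : Qpos) = ⟨t, ht.1⟩ + ⟨1 - t, by linarith [ht.2]⟩ := Subtype.ext (by simp)
    rw [h1, hmul, map_mul, ← mul_assoc, Complex.mul_conj, Complex.normSq_eq_norm_sq, habs]
    simp
  rw [flipInnerFn, dif_pos ht, castE_apply, castE_apply, hβy, hβy]
  simp only [map_add, LinearEquiv.map_smul, TensorProduct.comm_tmul, inner_tmul,
    tensor_inner_add_left, tensor_inner_add_right, tensor_inner_smul_left,
    tensor_inner_smul_right, hxy, hyx, hxx, hyy, map_mul, Complex.conj_ofReal]
  rw [hconj, flipFactor]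
  push_cast
  ring

lemma flipInnerFn_zero (h3 : Cond3With E β c η x y) (hc : 0 < c) :
    flipInnerFn E β (y 1) 0 = 1 := by
  have h : ‖y 1‖ ^ 2 = yNormSq c ((1 : Qpos) : ℚ) := h3.2.2.2.2.1 1
  rw [Positive.val_one, Rat.cast_one, yNormSq_one hc] at h
  rw [flipInnerFn, dif_neg (by simp), ← Complex.ofReal_pow, h, Complex.ofReal_one]

end Cond3

theorem statement17_general
    (E : Qpos → Type*) [∀ t, NormedAddCommGroup (E t)] [∀ t, InnerProductSpace ℂ (E t)]
    (β : ∀ s t : Qpos, E (s + t) →ₗᵢ[ℂ] (E s ⊗[ℂ] E t))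
    (c : ℝ) (hc : 0 < c) (η : Qpos → ℂ)
    (x y : ∀ t : Qpos, E t) (h3 : Cond3With E β c η x y)
    (huc : UniformContinuousOn (flipInnerFn E β (y 1)) (Set.Icc (0 : ℚ) 1)) :
    ∃ b : ℝ, ∀ t : Qpos,
      η t = Complex.exp (Complex.I * (b : ℂ) * (((t : ℚ) : ℝ) : ℂ)) := by
  refine exists_eq_exp_of_tendsto_one h3.1 h3.2.1 ?_
  have hflip : Tendsto (fun t : Qpos => flipInnerFn E β (y 1) t) 𝓝₊₀ (𝓝 1) := by
    simpa only [flipInnerFn_zero h3 hc] using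
      tendsto_comp_coe_of_continuousWithinAt (huc.continuousOn 0 ⟨le_rfl, zero_le_one⟩)
  have hfactor : Tendsto (fun t : Qpos => flipFactor c (conj (η 1)) ((t : ℚ) : ℝ))
      𝓝₊₀ (𝓝 1) := by
    simpa only [Function.comp_apply, Rat.cast_zero, flipFactor_zero hc] using
      tendsto_comp_coe_of_continuousWithinAt
        ((continuous_flipFactor hc _).comp Rat.continuous_coe_real).continuousWithinAt
  have hquot := hflip.div hfactor one_ne_zero
  rw [div_one] at hquot
  refine hquot.congr' ?_
  filter_upwards [eventually_coe_lt_one, hfactor.eventually_ne one_ne_zero] with t ht hne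
  rw [Pi.div_apply, flipInnerFn_eq_mul_flipFactor h3 ⟨t.2, ht⟩, mul_div_cancel_right₀ _ hne]

/-- **Lemma 4.4.** Under Condition (3), if the function
`t ↦ ⟨β_{t,1-t} y₁, ξ_{1-t,t} β_{1-t,t} y₁⟩` (with value `‖y₁‖² = 1` at the endpoints) is
uniformly continuous on `ℚ ∩ [0,1]`, then `η_t = e^{ibt}` for some real `b`. -/
theorem statement17
    (E : Qpos → Type*) [∀ t, NormedAddCommGroup (E t)] [∀ t, InnerProductSpace ℂ (E t)]
    (hdim : ∀ t, Module.finrank ℂ (E t) = 2)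
    (β : ∀ s t : Qpos, E (s + t) →ₗᵢ[ℂ] (E s ⊗[ℂ] E t))
    (hassoc : SubprodAssocQ E β)
    (c : ℝ) (hc : 0 < c) (η : Qpos → ℂ)
    (x y : ∀ t : Qpos, E t) (h3 : Cond3With E β c η x y)
    (huc : UniformContinuousOn (flipInnerFn E β (y 1)) (Set.Icc (0 : ℚ) 1)) :
    ∃ b : ℝ, ∀ t : Qpos,
      η t = Complex.exp (Complex.I * (b : ℂ) * (((t : ℚ) : ℝ) : ℂ)) :=
  statement17_general E β c hc η x y h3 huc

end SubprodHilbert
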